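/- arXiv:1408.5176 — 3 statements merged into one kernel-verified Lean document; each statement's English description precedes it below -/
import Mathlib

section
/- For every finite simple graph G and every nonempty proper subset S of V(G), one has α₁(G) + τ(G) ≤ (α₁(G[S]) + τ(G[S])) + (α₁(G[S̄]) + τ(G[S̄])) + |[S, S̄]|, where G[S] and G[S̄] are the induced subgraphs on S and its complement S̄. -/
/-!
Take a maximum triangle-independent set `A` of `G` and minimum triangle edge covers of `G[S]`
and `G[S̄]`. The edges of `A` inside `S` or inside `S̄` stay triangle-independent in the induced
subgraphs, so `|A| ≤ α₁(G[S]) + α₁(G[S̄]) + |A ∩ [S, S̄]|`. A triangle of `G` meeting both sides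
has two edges in `[S, S̄]`, of which `A` holds at most one; hence the two covers together with
`[S, S̄] \ A` meet every triangle of `G`, and `τ(G) ≤ τ(G[S]) + τ(G[S̄]) + |[S, S̄] \ A|`.
Adding the two bounds gives the inequality.
-/

open Finset

/-- `A` is a triangle-independent set of edges of `G`: it consists of edges of `G`
and contains at most one edge from each triangle of `G`. -/
def TriIndep {V : Type*} (G : SimpleGraph V) (A : Finset (Sym2 V)) : Prop :=
  (A : Set (Sym2 V)) ⊆ G.edgeSet ∧
    ∀ x y z : V, G.Adj x y → G.Adj y z → G.Adj x z →
      ¬(s(x, y) ∈ A ∧ s(y, z) ∈ A)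

/-- `α₁ G`: the maximum size of a triangle-independent set of edges of `G`. -/
noncomputable def alpha1 {V : Type*} [Fintype V] (G : SimpleGraph V) : ℕ :=
  sSup {k | ∃ A : Finset (Sym2 V), TriIndep G A ∧ A.card = k}

/-- `τ G`: the minimum size of a set of edges whose deletion makes `G` triangle-free. -/
noncomputable def tau {V : Type*} [Fintype V] (G : SimpleGraph V) : ℕ :=
  sInf {k | ∃ X : Finset (Sym2 V), (X : Set (Sym2 V)) ⊆ G.edgeSet ∧
    (G.deleteEdges (X : Set (Sym2 V))).CliqueFree 3 ∧ X.card = k}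

/-- `τ_B G`: the minimum size of a set of edges whose deletion makes `G` bipartite. -/
noncomputable def tauB {V : Type*} [Fintype V] (G : SimpleGraph V) : ℕ :=
  sInf {k | ∃ X : Finset (Sym2 V), (X : Set (Sym2 V)) ⊆ G.edgeSet ∧
    (G.deleteEdges (X : Set (Sym2 V))).Colorable 2 ∧ X.card = k}

open scoped Classical in
/-- The edge cut `[S, S̄]`: the set of edges of `G` with one endpoint in `S`
and the other outside `S`. -/
noncomputable def edgeCut {V : Type*} [Fintype V] (G : SimpleGraph V) (S : Finset V) :
    Finset (Sym2 V) :=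
  G.edgeFinset.filter (fun e => ∃ x ∈ S, ∃ y ∉ S, e = s(x, y))

open scoped Classical in
/-- The number of edges of `G`. -/
noncomputable def edgeCount {V : Type*} [Fintype V] (G : SimpleGraph V) : ℕ :=
  G.edgeFinset.card

/-- The independence number of `G`. -/
noncomputable def indepNum {V : Type*} [Fintype V] (G : SimpleGraph V) : ℕ :=
  sSup {k | ∃ I : Finset V, (∀ x ∈ I, ∀ y ∈ I, ¬G.Adj x y) ∧ I.card = k}

/-- `K₄⁻`: the complete graph on 4 vertices with one edge deleted. -/
def K4minus : SimpleGraph (Fin 4) := (SimpleGraph.completeGraph (Fin 4)).deleteEdges {s(0, 1)}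

namespace SimpleGraph

variable {V : Type*} {G : SimpleGraph V}

theorem deleteEdges_cliqueFree_three_iff {X : Set (Sym2 V)} :
    (G.deleteEdges X).CliqueFree 3 ↔ ∀ x y z, G.Adj x y → G.Adj y z → G.Adj x z →
      s(x, y) ∈ X ∨ s(y, z) ∈ X ∨ s(x, z) ∈ X := by
  classical
  constructor
  · intro h x y z hxy hyz hxz
    by_contra! hX
    apply h {x, y, z}
    rw [is3Clique_triple_iff]
    simp only [deleteEdges_adj]
    exact ⟨⟨hxy, hX.1⟩, ⟨hxz, hX.2.2⟩, ⟨hyz, hX.2.1⟩⟩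
  · rintro h t ht
    obtain ⟨x, y, z, hxy, hxz, hyz, -⟩ := is3Clique_iff.mp ht
    rw [deleteEdges_adj] at hxy hxz hyz
    rcases h x y z hxy.1 hyz.1 hxz.1 with h | h | h
    exacts [hxy.2 h, hyz.2 h, hxz.2 h]

end SimpleGraph

open SimpleGraph

section TriangleParameters

variable {V : Type*} {G : SimpleGraph V}

theorem TriIndep.mono {A B : Finset (Sym2 V)} (hA : TriIndep G A) (hBA : B ⊆ A) :
    TriIndep G B :=
  ⟨(coe_subset.mpr hBA).trans hA.1, fun x y z hxy hyz hxz h =>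
    hA.2 x y z hxy hyz hxz ⟨hBA h.1, hBA h.2⟩⟩

variable [Fintype V]

theorem bddAbove_setOf_triIndep_card (G : SimpleGraph V) :
    BddAbove {k | ∃ A : Finset (Sym2 V), TriIndep G A ∧ #A = k} := by
  classical
  exact ⟨Fintype.card (Sym2 V), fun k ⟨A, _, hc⟩ => hc ▸ A.card_le_univ⟩

theorem TriIndep.card_le_alpha1 {A : Finset (Sym2 V)} (hA : TriIndep G A) :
    #A ≤ alpha1 G :=
  le_csSup (bddAbove_setOf_triIndep_card G) ⟨A, hA, rfl⟩

theorem exists_triIndep_card_eq_alpha1 (G : SimpleGraph V) :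
    ∃ A : Finset (Sym2 V), TriIndep G A ∧ #A = alpha1 G :=
  Nat.sSup_mem (s := {k | ∃ A : Finset (Sym2 V), TriIndep G A ∧ #A = k})
    ⟨0, ∅, ⟨by simp, fun _ _ _ _ _ _ h => by simp at h⟩, rfl⟩
    (bddAbove_setOf_triIndep_card G)

theorem tau_le_card {X : Finset (Sym2 V)} (hXG : (X : Set (Sym2 V)) ⊆ G.edgeSet)
    (hX : (G.deleteEdges (X : Set (Sym2 V))).CliqueFree 3) : tau G ≤ #X :=
  Nat.sInf_le ⟨X, hXG, hX, rfl⟩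

theorem exists_card_eq_tau (G : SimpleGraph V) :
    ∃ X : Finset (Sym2 V), (X : Set (Sym2 V)) ⊆ G.edgeSet ∧
      (G.deleteEdges (X : Set (Sym2 V))).CliqueFree 3 ∧ #X = tau G := by
  classical
  refine Nat.sInf_mem (s := {k | ∃ X : Finset (Sym2 V), (X : Set (Sym2 V)) ⊆ G.edgeSet ∧
      (G.deleteEdges (X : Set (Sym2 V))).CliqueFree 3 ∧ #X = k})
    ⟨#G.edgeFinset, G.edgeFinset, by simp, ?_, rfl⟩
  rw [coe_edgeFinset, deleteEdges_edgeSet, sdiff_self]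
  exact cliqueFree_bot (by norm_num)

end TriangleParameters

section InducedSubgraph

variable {V : Type*} {G : SimpleGraph V}

theorem TriIndep.card_le_alpha1_induce {A : Finset (Sym2 V)} (hA : TriIndep G A) {s : Set V}
    [Fintype s] (hAs : ∀ e ∈ A, ∀ v ∈ e, v ∈ s) : #A ≤ alpha1 (G.induce s) := by
  classical
  have hf : Function.Injective (Sym2.map ((↑) : s → V)) :=
    Sym2.map.injective Subtype.val_injective
  have hcard : #(A.preimage _ hf.injOn) = #A := by
    rw [card_preimage, filter_true_of_mem]
    exact fun e he => ⟨_, Sym2.attachWith_map_subtypeVal (hAs e he)⟩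
  rw [← hcard]
  refine TriIndep.card_le_alpha1 ⟨fun e he => ?_, fun x y z hxy hyz hxz h => ?_⟩
  · exact ((Embedding.induce s).map_mem_edgeSet_iff).mp (hA.1 (mem_preimage.mp he))
  · simp only [mem_preimage, Sym2.map_mk] at h
    exact hA.2 x y z hxy hyz hxz h

theorem exists_triangle_cover_card_eq_tau_induce (G : SimpleGraph V) (s : Set V) [Fintype s] :
    ∃ Y : Finset (Sym2 V), #Y = tau (G.induce s) ∧ (Y : Set (Sym2 V)) ⊆ G.edgeSet ∧
      ∀ x ∈ s, ∀ y ∈ s, ∀ z ∈ s, G.Adj x y → G.Adj y z → G.Adj x z →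
        s(x, y) ∈ Y ∨ s(y, z) ∈ Y ∨ s(x, z) ∈ Y := by
  obtain ⟨X, hXG, hX, hXcard⟩ := exists_card_eq_tau (G.induce s)
  refine ⟨X.map (Function.Embedding.subtype (· ∈ s)).sym2Map, by rw [card_map, hXcard], ?_, ?_⟩
  · intro _ hY
    obtain ⟨e, he, rfl⟩ := mem_map.mp hY
    exact ((Embedding.induce s).map_mem_edgeSet_iff).mpr (hXG he)
  · intro x hx y hy z hz hxy hyz hxz
    rcases deleteEdges_cliqueFree_three_iff.mp hX ⟨x, hx⟩ ⟨y, hy⟩ ⟨z, hz⟩ hxy hyz hxz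
      with h | h | h
    exacts [Or.inl (mem_map_of_mem _ h), Or.inr (Or.inl (mem_map_of_mem _ h)),
      Or.inr (Or.inr (mem_map_of_mem _ h))]

end InducedSubgraph

section EdgeCut

variable {V : Type*} [Fintype V] {G : SimpleGraph V} {S : Finset V} {A : Finset (Sym2 V)}

theorem mem_edgeCut_iff {x y : V} :
    s(x, y) ∈ edgeCut G S ↔ G.Adj x y ∧ ¬(x ∈ S ↔ y ∈ S) := by
  simp only [edgeCut, mem_filter, mem_edgeFinset, mem_edgeSet, Sym2.eq_iff]
  constructor
  · rintro ⟨hxy, a, ha, b, hb, ⟨rfl, rfl⟩ | ⟨rfl, rfl⟩⟩ <;> tauto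
  · rintro ⟨hxy, hS⟩
    by_cases hx : x ∈ S
    · exact ⟨hxy, x, hx, y, by tauto, .inl ⟨rfl, rfl⟩⟩
    · exact ⟨hxy, y, by tauto, x, hx, .inr ⟨rfl, rfl⟩⟩

theorem edgeCut_subset_edgeSet : (edgeCut G S : Set (Sym2 V)) ⊆ G.edgeSet := by
  classical
  intro e he
  simp only [edgeCut, mem_coe, mem_filter, mem_edgeFinset] at he
  exact he.1

variable [DecidableEq V]

theorem TriIndep.card_le_alpha1_induce_add (hA : TriIndep G A) :
    #A ≤ alpha1 (G.induce (S : Set V)) + alpha1 (G.induce ((Sᶜ : Finset V) : Set V)) +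
      #(A ∩ edgeCut G S) := by
  set AS := A.filter (fun e => ∀ v ∈ e, v ∈ S)
  set AT := A.filter (fun e => ∀ v ∈ e, v ∉ S)
  have hsplit : A ⊆ AS ∪ AT ∪ (A ∩ edgeCut G S) := by
    intro e he
    induction e using Sym2.ind with
    | h x y =>
      have hxy : G.Adj x y := hA.1 he
      simp only [AS, AT, mem_union, mem_filter, mem_inter, mem_edgeCut_iff, Sym2.mem_iff,
        forall_eq_or_imp, forall_eq]
      tauto
  have hAS : #AS ≤ alpha1 (G.induce (S : Set V)) :=
    (hA.mono (filter_subset _ _)).card_le_alpha1_induce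
      fun e he v hv => mem_coe.mpr ((mem_filter.mp he).2 v hv)
  have hAT : #AT ≤ alpha1 (G.induce ((Sᶜ : Finset V) : Set V)) :=
    (hA.mono (filter_subset _ _)).card_le_alpha1_induce
      fun e he v hv => by simpa using (mem_filter.mp he).2 v hv
  calc #A ≤ #(AS ∪ AT ∪ (A ∩ edgeCut G S)) := card_le_card hsplit
    _ ≤ #AS + #AT + #(A ∩ edgeCut G S) :=
      (card_union_le _ _).trans (by gcongr; exact card_union_le _ _)
    _ ≤ _ := by gcongr

theorem TriIndep.mem_edgeCut_sdiff_of_crossing_triangle (hA : TriIndep G A) {x y z : V}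
    (hxy : G.Adj x y) (hyz : G.Adj y z) (hxz : G.Adj x z) (hx : ¬(x ∈ S ↔ z ∈ S))
    (hy : ¬(y ∈ S ↔ z ∈ S)) :
    s(x, z) ∈ edgeCut G S \ A ∨ s(y, z) ∈ edgeCut G S \ A := by
  by_contra! h
  simp only [mem_sdiff, mem_edgeCut_iff, not_and, not_not] at h
  refine hA.2 x z y hxz hyz.symm hxy ⟨h.1 ⟨hxz, hx⟩, ?_⟩
  rw [Sym2.eq_swap]
  exact h.2 ⟨hyz, hy⟩

theorem TriIndep.tau_le_tau_induce_add (hA : TriIndep G A) :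
    tau G ≤ tau (G.induce (S : Set V)) + tau (G.induce ((Sᶜ : Finset V) : Set V)) +
      #(edgeCut G S \ A) := by
  obtain ⟨YS, hYS, hYSG, hYShit⟩ := exists_triangle_cover_card_eq_tau_induce G (S : Set V)
  obtain ⟨YT, hYT, hYTG, hYThit⟩ :=
    exists_triangle_cover_card_eq_tau_induce G ((Sᶜ : Finset V) : Set V)
  set Y := YS ∪ YT ∪ (edgeCut G S \ A)
  have hYG : (Y : Set (Sym2 V)) ⊆ G.edgeSet := by
    simp only [Y, coe_union, Set.union_subset_iff]
    exact ⟨⟨hYSG, hYTG⟩, (coe_subset.mpr sdiff_subset).trans edgeCut_subset_edgeSet⟩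
  have hY : (G.deleteEdges (Y : Set (Sym2 V))).CliqueFree 3 := by
    refine deleteEdges_cliqueFree_three_iff.mpr fun x y z hxy hyz hxz => ?_
    simp only [Y, coe_union, Set.mem_union, mem_coe]
    by_cases hxy' : x ∈ S ↔ y ∈ S <;> by_cases hyz' : y ∈ S ↔ z ∈ S
    · by_cases hx : x ∈ S
      · have := hYShit x hx y (by tauto) z (by tauto) hxy hyz hxz
        tauto
      · have := hYThit x (mem_coe.mpr (mem_compl.mpr hx)) y
          (mem_coe.mpr (mem_compl.mpr (by tauto))) z (mem_coe.mpr (mem_compl.mpr (by tauto)))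
          hxy hyz hxz
        tauto
    · have := hA.mem_edgeCut_sdiff_of_crossing_triangle (S := S) hxy hyz hxz (by tauto) hyz'
      tauto
    · have := hA.mem_edgeCut_sdiff_of_crossing_triangle (S := S) hyz hxz.symm hxy.symm
        (by tauto) (by tauto)
      rw [Sym2.eq_swap (a := y), Sym2.eq_swap (a := z)] at this
      tauto
    · have := hA.mem_edgeCut_sdiff_of_crossing_triangle (S := S) hxz hyz.symm hxy hxy' (by tauto)
      rw [Sym2.eq_swap (a := z)] at this
      tauto
  calc tau G ≤ #Y := tau_le_card hYG hY
    _ ≤ #YS + #YT + #(edgeCut G S \ A) :=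
      (card_union_le _ _).trans (by gcongr; exact card_union_le _ _)
    _ = _ := by rw [hYS, hYT]

end EdgeCut

theorem stmt0_general {V : Type*} [Fintype V] [DecidableEq V] (G : SimpleGraph V) (S : Finset V) :
    alpha1 G + tau G ≤
      (alpha1 (G.induce (S : Set V)) + tau (G.induce (S : Set V))) +
        (alpha1 (G.induce ((Sᶜ : Finset V) : Set V)) +
          tau (G.induce ((Sᶜ : Finset V) : Set V))) +
        (edgeCut G S).card := by
  obtain ⟨A, hA, hAcard⟩ := exists_triIndep_card_eq_alpha1 G
  have hα := hA.card_le_alpha1_induce_add (S := S)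
  have hτ := hA.tau_le_tau_induce_add (S := S)
  have hcut := card_sdiff_add_card_inter (edgeCut G S) A
  rw [inter_comm] at hcut
  omega

/-- For every finite simple graph `G` and every nonempty proper subset `S` of the
vertex set, `α₁(G) + τ(G) ≤ (α₁(G[S]) + τ(G[S])) + (α₁(G[S̄]) + τ(G[S̄])) + |[S, S̄]|`. -/
theorem stmt0 {V : Type*} [Fintype V] [DecidableEq V] (G : SimpleGraph V) (S : Finset V)
    (hS : S.Nonempty) (hSu : S ≠ Finset.univ) :
    alpha1 G + tau G ≤
      (alpha1 (G.induce (S : Set V)) + tau (G.induce (S : Set V))) +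
        (alpha1 (G.induce ((Sᶜ : Finset V) : Set V)) +
          tau (G.induce ((Sᶜ : Finset V) : Set V))) +
        (edgeCut G S).card :=
  stmt0_general G S
end

section
/- Let G be a finite simple graph, let A ⊆ E(G) be a triangle-independent set, and let S ⊆ V(G) be a set such that the induced subgraph G[S] has independence number at most t. Then the number of edges of A with one endpoint in S and one endpoint outside S satisfies |[S, S̄] ∩ A| ≤ t·(n − |S|), where n = |V(G)|. -/
/-!
Every edge of `[S, S̄] ∩ A` is `s(u, v)` with `v ∉ S` and `u ∈ S` an `A`-neighbour of `v`.
The `A`-neighbours of a vertex are pairwise non-adjacent, since two adjacent ones would span a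
triangle with two edges in `A`; so each of the `n - |S|` vertices `v ∉ S` has at most `t`
of them in `S`.
-/

open Finset

open scoped Classical in
lemma mem_edgeCut {V : Type*} [Fintype V] {G : SimpleGraph V} {S : Finset V} {e : Sym2 V} :
    e ∈ edgeCut G S ↔ e ∈ G.edgeFinset ∧ ∃ x ∈ S, ∃ y ∉ S, e = s(x, y) :=
  mem_filter

lemma card_le_indepNum {V : Type*} [Fintype V] (G : SimpleGraph V) {I : Finset V}
    (hI : ∀ x ∈ I, ∀ y ∈ I, ¬G.Adj x y) : I.card ≤ indepNum G :=
  le_csSup ⟨Fintype.card V, by rintro k ⟨J, -, rfl⟩; exact card_le_univ J⟩ ⟨I, hI, rfl⟩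

lemma card_le_indepNum_induce {V : Type*} [Fintype V] (G : SimpleGraph V) {S I : Finset V}
    (hIS : I ⊆ S) (hI : ∀ x ∈ I, ∀ y ∈ I, ¬G.Adj x y) :
    I.card ≤ indepNum (G.induce (S : Set V)) := by
  classical
  have hcard : (I.subtype (· ∈ (S : Set V))).card = I.card := by
    rw [card_subtype, filter_true_of_mem fun u hu => mem_coe.mpr (hIS hu)]
  rw [← hcard]
  exact card_le_indepNum _ fun x hx y hy => hI x (mem_subtype.mp hx) y (mem_subtype.mp hy)

namespace TriIndep

variable {V : Type*} {G : SimpleGraph V} {A : Finset (Sym2 V)}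

lemma adj_of_mem (hA : TriIndep G A) {x y : V} (h : s(x, y) ∈ A) : G.Adj x y :=
  hA.1 h

lemma not_adj_of_mem_of_mem (hA : TriIndep G A) {v x y : V} (hx : s(x, v) ∈ A)
    (hy : s(y, v) ∈ A) : ¬G.Adj x y := fun hxy =>
  hA.2 x v y (hA.adj_of_mem hx) (hA.adj_of_mem hy).symm hxy ⟨hx, Sym2.eq_swap ▸ hy⟩

lemma card_filter_mem_le_indepNum_induce [Fintype V] [DecidableEq V] (hA : TriIndep G A)
    (S : Finset V) (v : V) :
    (S.filter fun u => s(u, v) ∈ A).card ≤ indepNum (G.induce (S : Set V)) :=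
  card_le_indepNum_induce G (filter_subset _ _) fun _ hx _ hy =>
    hA.not_adj_of_mem_of_mem (mem_filter.mp hx).2 (mem_filter.mp hy).2

end TriIndep

lemma edgeCut_inter_subset_biUnion {V : Type*} [Fintype V] [DecidableEq V] (G : SimpleGraph V)
    (S : Finset V) (A : Finset (Sym2 V)) :
    edgeCut G S ∩ A ⊆
      Sᶜ.biUnion fun v => (S.filter fun u => s(u, v) ∈ A).image fun u => s(u, v) := by
  intro e he
  obtain ⟨hcut, heA⟩ := mem_inter.mp he
  obtain ⟨-, x, hx, y, hy, rfl⟩ := mem_edgeCut.mp hcut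
  exact mem_biUnion.mpr ⟨y, mem_compl.mpr hy, mem_image_of_mem _ (mem_filter.mpr ⟨hx, heA⟩)⟩

/-- If `A` is a triangle-independent set in `G` and the induced subgraph `G[S]` has
independence number at most `t`, then `|[S, S̄] ∩ A| ≤ t(n − |S|)`. -/
theorem stmt7 {V : Type*} [Fintype V] [DecidableEq V] (G : SimpleGraph V)
    (A : Finset (Sym2 V)) (hA : TriIndep G A)
    (S : Finset V) (t : ℕ) (ht : indepNum (G.induce (S : Set V)) ≤ t) :
    (edgeCut G S ∩ A).card ≤ t * (Fintype.card V - S.card) := by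
  calc (edgeCut G S ∩ A).card
      ≤ (Sᶜ.biUnion fun v => (S.filter fun u => s(u, v) ∈ A).image fun u => s(u, v)).card :=
        card_le_card (edgeCut_inter_subset_biUnion G S A)
    _ ≤ ∑ v ∈ Sᶜ, (S.filter fun u => s(u, v) ∈ A).card :=
        card_biUnion_le.trans (sum_le_sum fun _ _ => card_image_le)
    _ ≤ ∑ _v ∈ Sᶜ, t := sum_le_sum fun v _ => (hA.card_filter_mem_le_indepNum_induce S v).trans ht
    _ = t * (Fintype.card V - S.card) := by rw [sum_const, card_compl, smul_eq_mul, mul_comm]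
end

section
/- If G is a triangle-free n-vertex graph, then α₁(G) + τ_B(G) ≤ n²/4. -/
open Finset

/-!
Let `v` be a vertex of maximum degree `Δ`. Since `G` is triangle-free, `N(v)` is independent,
so deleting the set `X` of edges with no endpoint in `N(v)` leaves a graph that is bipartite
with sides `N(v)` and its complement; hence `τ_B ≤ |X|`, while trivially `α₁ ≤ e(G)`.
Every edge has an endpoint outside `N(v)` and the edges of `X` have two, so
`e(G) + |X| ≤ ∑_{u ∉ N(v)} deg u ≤ (n - Δ) Δ ≤ n² / 4`.
-/

open SimpleGraph

theorem four_mul_tsub_mul_le_sq (n d : ℕ) : 4 * ((n - d) * d) ≤ n ^ 2 := by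
  rcases le_total d n with hdn | hnd
  · simpa [mul_assoc, Nat.sub_add_cancel hdn] using four_mul_le_sq_add (n - d) d
  · simp [Nat.sub_eq_zero_of_le hnd]

section

variable {V : Type*} [Fintype V] (G : SimpleGraph V)

theorem alpha1_le_card_edgeFinset [DecidableRel G.Adj] : alpha1 G ≤ #G.edgeFinset := by
  refine csSup_le ⟨0, ∅, ⟨by simp, by simp⟩, rfl⟩ ?_
  rintro k ⟨A, hA, rfl⟩
  exact card_le_card fun e he => mem_edgeFinset.mpr (hA.1 he)

theorem tauB_le_card {X : Finset (Sym2 V)} (hX : (X : Set (Sym2 V)) ⊆ G.edgeSet)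
    (hbip : (G.deleteEdges X).Colorable 2) : tauB G ≤ #X :=
  Nat.sInf_le ⟨X, hX, hbip, rfl⟩

theorem tauB_le_card_edgeFinset [DecidableRel G.Adj] : tauB G ≤ #G.edgeFinset :=
  tauB_le_card G (by simp) (by simpa using (colorable_one_iff.mpr rfl).mono one_le_two)

variable {G}

theorem isBipartite_deleteEdges_avoiding [DecidableRel G.Adj] [DecidableEq V] {S : Finset V}
    (hS : G.IsIndepSet S) :
    (G.deleteEdges ({e ∈ G.edgeFinset | ∀ x ∈ e, x ∉ S} : Finset (Sym2 V))).IsBipartite := by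
  refine IsBipartiteWith.isBipartite (s := S) (t := (S : Set V)ᶜ) ⟨disjoint_compl_right, ?_⟩
  intro a b hab
  simp only [coe_filter, mem_edgeFinset, deleteEdges_adj, Set.mem_ofPred_eq, mem_edgeSet,
    Sym2.mem_iff, forall_eq_or_imp, forall_eq, not_and, Decidable.not_not] at hab
  obtain ⟨hab, hcross⟩ := hab
  by_cases ha : a ∈ S
  · exact Or.inl ⟨ha, fun hb => hS ha hb hab.ne hab⟩
  · exact Or.inr ⟨ha, hcross hab ha⟩

theorem one_add_ite_le_card_filter_mem [DecidableRel G.Adj] [DecidableEq V] {S : Finset V}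
    (hS : G.IsIndepSet S) {e : Sym2 V} (he : e ∈ G.edgeFinset) :
    1 + (if ∀ x ∈ e, x ∉ S then 1 else 0) ≤ #{u ∈ Sᶜ | u ∈ e} := by
  induction e with | h a b => ?_
  have hab : G.Adj a b := mem_edgeFinset.mp he
  split_ifs with hout
  · have : ({a, b} : Finset V) ⊆ {u ∈ Sᶜ | u ∈ s(a, b)} := by
      intro x hx
      have hxe : x ∈ s(a, b) := Sym2.mem_iff.mpr (by simpa using hx)
      exact mem_filter.mpr ⟨mem_compl.mpr (hout x hxe), hxe⟩
    simpa [card_pair hab.ne] using card_le_card this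
  · have : a ∉ S ∨ b ∉ S := not_and_or.mp fun h => hS h.1 h.2 hab.ne hab
    rcases this with h | h
    · exact card_pos.mpr ⟨a, by simp [h]⟩
    · exact card_pos.mpr ⟨b, by simp [h]⟩

theorem card_edgeFinset_add_card_avoiding_le [DecidableRel G.Adj] [DecidableEq V]
    {S : Finset V} (hS : G.IsIndepSet S) :
    #G.edgeFinset + #{e ∈ G.edgeFinset | ∀ x ∈ e, x ∉ S} ≤ ∑ u ∈ Sᶜ, G.degree u :=
  calc #G.edgeFinset + #{e ∈ G.edgeFinset | ∀ x ∈ e, x ∉ S}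
      = ∑ e ∈ G.edgeFinset, (1 + if ∀ x ∈ e, x ∉ S then 1 else 0) := by
        rw [sum_add_distrib, card_filter, card_eq_sum_ones]
    _ ≤ ∑ e ∈ G.edgeFinset, #{u ∈ Sᶜ | u ∈ e} :=
        sum_le_sum fun _ he => one_add_ite_le_card_filter_mem hS he
    _ = ∑ u ∈ Sᶜ, G.degree u := by
        simp_rw [← card_incidenceFinset_eq_degree, incidenceFinset_eq_filter, card_filter]
        exact sum_comm

theorem alpha1_add_tauB_le_of_forall_degree_le [DecidableRel G.Adj] [DecidableEq V]
    (h : G.CliqueFree 3) {v : V} (hv : ∀ u, G.degree u ≤ G.degree v) :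
    alpha1 G + tauB G ≤ (Fintype.card V - G.degree v) * G.degree v := by
  have hN : G.IsIndepSet (G.neighborFinset v : Set V) := by
    simpa using isIndepSet_neighborSet_of_triangleFree G h v
  calc alpha1 G + tauB G
      ≤ #G.edgeFinset + #{e ∈ G.edgeFinset | ∀ x ∈ e, x ∉ G.neighborFinset v} :=
        add_le_add (alpha1_le_card_edgeFinset G)
          (tauB_le_card G (fun e he => mem_edgeFinset.mp (mem_filter.mp he).1)
            (isBipartite_deleteEdges_avoiding hN))
    _ ≤ ∑ u ∈ (G.neighborFinset v)ᶜ, G.degree u := card_edgeFinset_add_card_avoiding_le hN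
    _ ≤ #(G.neighborFinset v)ᶜ * G.degree v := by
        simpa using sum_le_card_nsmul _ _ _ fun u (_ : u ∈ (G.neighborFinset v)ᶜ) => hv u
    _ = (Fintype.card V - G.degree v) * G.degree v := by
        rw [card_compl, card_neighborFinset_eq_degree]

end

/-- If `G` is a triangle-free `n`-vertex graph, then `α₁(G) + τ_B(G) ≤ n²/4`. -/
theorem stmt11 {V : Type*} [Fintype V] (G : SimpleGraph V) (h : G.CliqueFree 3) :
    (alpha1 G + tauB G : ℝ) ≤ (Fintype.card V : ℝ) ^ 2 / 4 := by
  classical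
  suffices 4 * (alpha1 G + tauB G) ≤ Fintype.card V ^ 2 by
    have : (4 * (alpha1 G + tauB G) : ℝ) ≤ Fintype.card V ^ 2 := by exact_mod_cast this
    linarith
  cases isEmpty_or_nonempty V with
  | inl _ =>
    have hE : #G.edgeFinset = 0 := card_eq_zero.mpr (eq_empty_of_isEmpty _)
    have := alpha1_le_card_edgeFinset G
    have := tauB_le_card_edgeFinset G
    omega
  | inr _ =>
    obtain ⟨v, hv⟩ := G.exists_maximal_degree_vertex
    calc 4 * (alpha1 G + tauB G)
        ≤ 4 * ((Fintype.card V - G.degree v) * G.degree v) := by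
          gcongr
          exact alpha1_add_tauB_le_of_forall_degree_le h fun u => hv ▸ G.degree_le_maxDegree u
      _ ≤ Fintype.card V ^ 2 := four_mul_tsub_mul_le_sq _ _
end
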